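/- arXiv:math/0511020 — 3 statements merged into one kernel-verified Lean document; each statement's English description precedes it below -/
import Mathlib

section
/- Let π ∈ Sₙ and τ ∈ S_p be orthogonal, i.e., for every j ≥ 1, m_j(π) = 0 or m_j(τ) = 0 (in particular π and τ do not both have fixed points). Then the centralizer of π#τ in S_{n+p} is exactly the image under # of C_{Sₙ}(π) × C_{S_p}(τ); that is, every permutation of {1,…,n+p} commuting with π#τ is of the form g#h with g commuting with π and h commuting with τ. -/
open Equiv Equiv.Perm Function

section helpers
variable {α : Type*} [Fintype α] [DecidableEq α]

lemma mem_periodicPts_perm (f : Perm α) (x : α) : x ∈ periodicPts ⇑f :=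
  ⟨orderOf f, orderOf_pos f, by
    rw [IsPeriodicPt, IsFixedPt, iterate_eq_pow, pow_orderOf_eq_one, one_apply]⟩

lemma minimalPeriod_perm_pos (f : Perm α) (x : α) : 0 < minimalPeriod ⇑f x :=
  minimalPeriod_pos_of_mem_periodicPts (mem_periodicPts_perm f x)

lemma minimalPeriod_eq_card_support_cycleOf (f : Perm α) {x : α} (hx : x ∈ f.support) :
    minimalPeriod ⇑f x = (f.cycleOf x).support.card := by
  have hfx : f x ≠ x := mem_support.mp hx
  have hc : (f.cycleOf x).IsCycle := isCycle_cycleOf f hfx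
  have hxc : x ∈ (f.cycleOf x).support :=
    mem_support_cycleOf_iff.mpr ⟨Equiv.Perm.SameCycle.refl _ _, hx⟩
  have h1 : minimalPeriod ⇑f x = minimalPeriod ⇑(f.cycleOf x) x := by
    rw [minimalPeriod_eq_minimalPeriod_iff]
    intro k
    simp only [IsPeriodicPt, IsFixedPt, iterate_eq_pow]
    rw [cycleOf_pow_apply_self]
  rw [h1, ← hc.orderOf]
  refine Nat.dvd_antisymm ?_ ?_
  · exact IsPeriodicPt.minimalPeriod_dvd (by
      rw [IsPeriodicPt, IsFixedPt, iterate_eq_pow, pow_orderOf_eq_one, one_apply])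
  · refine orderOf_dvd_of_pow_eq_one ?_
    refine (hc.pow_eq_one_iff' (x := x) (mem_support.mp hxc)).mpr ?_
    have h2 := iterate_minimalPeriod (f := ⇑(f.cycleOf x)) (x := x)
    rwa [iterate_eq_pow] at h2
end helpers

/-- `cycleCount π j` is the number `m_j(π)` of cycles of length `j` in the decomposition of
`π` into disjoint cycles, where fixed points are counted as cycles of length `1`. -/
def cycleCount {n : ℕ} (π : Equiv.Perm (Fin n)) (j : ℕ) : ℕ :=
  if j = 1 then n - π.support.card else Multiset.count j π.cycleType

lemma cycleCount_minimalPeriod_ne_zero {n : ℕ} (π : Perm (Fin n)) (x : Fin n) :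
    cycleCount π (minimalPeriod ⇑π x) ≠ 0 := by
  by_cases hx : x ∈ π.support
  · have h2 : 2 ≤ (π.cycleOf x).support.card :=
      two_le_card_support_cycleOf_iff.mpr (mem_support.mp hx)
    rw [minimalPeriod_eq_card_support_cycleOf π hx]
    have hne : (π.cycleOf x).support.card ≠ 1 := by omega
    rw [cycleCount, if_neg hne]
    refine Multiset.count_ne_zero.mpr ?_
    rw [cycleType_def]
    exact Multiset.mem_map.mpr ⟨π.cycleOf x,
      (cycleOf_mem_cycleFactorsFinset_iff).mpr hx, rfl⟩
  · have hfix : minimalPeriod ⇑π x = 1 :=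
      minimalPeriod_eq_one_iff_isFixedPt.mpr (notMem_support.mp hx)
    rw [hfix, cycleCount, if_pos rfl]
    have hcard : π.support.card < n := by
      have hss : π.support ⊂ Finset.univ :=
        Finset.ssubset_univ_iff.mpr (fun h => hx (h ▸ Finset.mem_univ x))
      simpa using Finset.card_lt_card hss
    omega

lemma minimalPeriod_commute {α : Type*} [Fintype α] [DecidableEq α]
    {f g : Perm α} (h : f * g = g * f) (x : α) :
    minimalPeriod ⇑f (g x) = minimalPeriod ⇑f x := by
  rw [minimalPeriod_eq_minimalPeriod_iff]
  intro k
  simp only [IsPeriodicPt, IsFixedPt, iterate_eq_pow]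
  have hc : f ^ k * g = g * f ^ k := ((show Commute f g from h).pow_left k).eq
  have : (f ^ k) (g x) = g ((f ^ k) x) := by
    rw [← Perm.mul_apply, hc, Perm.mul_apply]
  rw [this]
  exact ⟨fun h' => g.injective h', fun h' => by rw [h']⟩

lemma sumCongr_pow {α β : Type*} (f : Perm α) (g : Perm β) (k : ℕ) :
    Equiv.sumCongr f g ^ k = Equiv.sumCongr (f ^ k) (g ^ k) := by
  have : Equiv.sumCongr f g = Equiv.Perm.sumCongrHom α β (f, g) := rfl
  rw [this, ← map_pow, Prod.pow_def]
  rfl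

lemma minimalPeriod_sumCongr_inl {n p : ℕ} (π : Perm (Fin n)) (τ : Perm (Fin p)) (x : Fin n) :
    minimalPeriod ⇑(Equiv.sumCongr π τ) (Sum.inl x) = minimalPeriod ⇑π x := by
  rw [minimalPeriod_eq_minimalPeriod_iff]
  intro k
  simp only [IsPeriodicPt, IsFixedPt, iterate_eq_pow, sumCongr_pow]
  simp [Equiv.sumCongr_apply]

lemma minimalPeriod_sumCongr_inr {n p : ℕ} (π : Perm (Fin n)) (τ : Perm (Fin p)) (y : Fin p) :
    minimalPeriod ⇑(Equiv.sumCongr π τ) (Sum.inr y) = minimalPeriod ⇑τ y := by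
  rw [minimalPeriod_eq_minimalPeriod_iff]
  intro k
  simp only [IsPeriodicPt, IsFixedPt, iterate_eq_pow, sumCongr_pow]
  simp [Equiv.sumCongr_apply]

/-- The homomorphism `# : Sₙ × S_p → S_{n+p}`: `(π#τ)(i) = π(i)` for `1 ≤ i ≤ n` and
`(π#τ)(i) = τ(i−n)+n` for `n+1 ≤ i ≤ n+p`. -/
def permHash {n p : ℕ} (π : Equiv.Perm (Fin n)) (τ : Equiv.Perm (Fin p)) :
    Equiv.Perm (Fin (n + p)) :=
  finSumFinEquiv.permCongr (Equiv.sumCongr π τ)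

lemma permHash_mul {n p : ℕ} (a c : Perm (Fin n)) (b d : Perm (Fin p)) :
    permHash a b * permHash c d = permHash (a * c) (b * d) := by
  ext x
  simp [permHash, Equiv.permCongr_apply, Perm.mul_apply, Perm.coe_mul, Sum.map_map]

/-- If `π ∈ Sₙ` and `τ ∈ S_p` are orthogonal (for every `j ≥ 1` either `m_j(π) = 0` or
`m_j(τ) = 0`), then the centralizer of `π#τ` in `S_{n+p}` is exactly the image under `#`
of `C_{Sₙ}(π) × C_{S_p}(τ)`. -/
theorem centralizer_permHash_of_orthogonal (n p : ℕ)
    (π : Equiv.Perm (Fin n)) (τ : Equiv.Perm (Fin p))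
    (horth : ∀ j : ℕ, 1 ≤ j → cycleCount π j = 0 ∨ cycleCount τ j = 0) :
    ∀ g : Equiv.Perm (Fin (n + p)),
      g ∈ Subgroup.centralizer ({permHash π τ} : Set (Equiv.Perm (Fin (n + p)))) ↔
      ∃ g₁ ∈ Subgroup.centralizer ({π} : Set (Equiv.Perm (Fin n))),
        ∃ g₂ ∈ Subgroup.centralizer ({τ} : Set (Equiv.Perm (Fin p))),
          g = permHash g₁ g₂ := by
  -- key: the minimal periods on the two blocks never coincide
  have hper : ∀ (x : Fin n) (y : Fin p), minimalPeriod ⇑π x ≠ minimalPeriod ⇑τ y := by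
    intro x y h
    have h1 := cycleCount_minimalPeriod_ne_zero π x
    have h2 := cycleCount_minimalPeriod_ne_zero τ y
    rcases horth (minimalPeriod ⇑π x) (minimalPeriod_perm_pos π x) with h' | h'
    · exact h1 h'
    · rw [← h] at h2; exact h2 h'
  intro g
  set e := finSumFinEquiv (m := n) (n := p) with he
  constructor
  · intro hg
    have hcomm : permHash π τ * g = g * permHash π τ :=
      Subgroup.mem_centralizer_iff.mp hg (permHash π τ) rfl
    set σ : Perm (Fin n ⊕ Fin p) := Equiv.sumCongr π τ with hσ
    set g' : Perm (Fin n ⊕ Fin p) := (e.permCongr).symm g with hg'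
    have hge : ∀ b, g (e b) = e (g' b) := by
      intro b
      have : g = e.permCongr g' := by rw [hg', Equiv.apply_symm_apply]
      rw [this]
      simp [Equiv.permCongr_apply]
    have hHe : ∀ b, permHash π τ (e b) = e (σ b) := by
      intro b; simp [permHash, Equiv.permCongr_apply, hσ, he]
    have hcomm' : g' * σ = σ * g' := by
      ext a
      have := congrArg (fun f : Perm (Fin (n + p)) => f (e a)) hcomm
      simp only [Perm.mul_apply] at this ⊢
      rw [hHe, hge, hge, hHe] at this
      exact (e.injective this).symm
    -- g' preserves the blocks
    have hmp : ∀ a, minimalPeriod ⇑σ (g' a) = minimalPeriod ⇑σ a := fun a =>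
      minimalPeriod_commute hcomm'.symm a
    have hInl : ∀ x : Fin n, ∃ x', g' (Sum.inl x) = Sum.inl x' := by
      intro x
      rcases h : g' (Sum.inl x) with x' | y'
      · exact ⟨x', rfl⟩
      · exfalso
        have := hmp (Sum.inl x)
        rw [h, hσ, minimalPeriod_sumCongr_inl, minimalPeriod_sumCongr_inr] at this
        exact hper x y' this.symm
    have hInr : ∀ y : Fin p, ∃ y', g' (Sum.inr y) = Sum.inr y' := by
      intro y
      rcases h : g' (Sum.inr y) with x' | y'
      · exfalso
        have := hmp (Sum.inr y)
        rw [h, hσ, minimalPeriod_sumCongr_inl, minimalPeriod_sumCongr_inr] at this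
        exact hper x' y this
      · exact ⟨y', rfl⟩
    set f₁ : Fin n → Fin n := fun x => (hInl x).choose with hf₁
    set f₂ : Fin p → Fin p := fun y => (hInr y).choose with hf₂
    have hf₁spec : ∀ x, g' (Sum.inl x) = Sum.inl (f₁ x) := fun x => (hInl x).choose_spec
    have hf₂spec : ∀ y, g' (Sum.inr y) = Sum.inr (f₂ y) := fun y => (hInr y).choose_spec
    have hinj₁ : Function.Injective f₁ := by
      intro a b hab
      have : g' (Sum.inl a) = g' (Sum.inl b) := by rw [hf₁spec, hf₁spec, hab]
      simpa using g'.injective this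
    have hinj₂ : Function.Injective f₂ := by
      intro a b hab
      have : g' (Sum.inr a) = g' (Sum.inr b) := by rw [hf₂spec, hf₂spec, hab]
      simpa using g'.injective this
    set g₁ : Perm (Fin n) := Equiv.ofBijective f₁ (Finite.injective_iff_bijective.mp hinj₁)
    set g₂ : Perm (Fin p) := Equiv.ofBijective f₂ (Finite.injective_iff_bijective.mp hinj₂)
    have hg₁ : ∀ x, g₁ x = f₁ x := fun x => rfl
    have hg₂ : ∀ y, g₂ y = f₂ y := fun y => rfl
    have hdecomp : g' = Equiv.sumCongr g₁ g₂ := by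
      ext a
      rcases a with x | y
      · simp [hf₁spec x, hg₁]
      · simp [hf₂spec y, hg₂]
    refine ⟨g₁, ?_, g₂, ?_, ?_⟩
    · rw [Subgroup.mem_centralizer_iff]
      rintro h rfl
      ext x : 1
      have := congrArg (fun f : Perm (Fin n ⊕ Fin p) => f (Sum.inl x)) hcomm'
      simp only [Perm.mul_apply, hdecomp] at this
      simpa [hσ, Perm.mul_apply] using this.symm
    · rw [Subgroup.mem_centralizer_iff]
      rintro h rfl
      ext y : 1
      have := congrArg (fun f : Perm (Fin n ⊕ Fin p) => f (Sum.inr y)) hcomm'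
      simp only [Perm.mul_apply, hdecomp] at this
      simpa [hσ, Perm.mul_apply] using this.symm
    · have : g = e.permCongr g' := by rw [hg', Equiv.apply_symm_apply]
      rw [this, hdecomp]
      rfl
  · rintro ⟨g₁, hg₁, g₂, hg₂, rfl⟩
    rw [Subgroup.mem_centralizer_iff]
    rintro h rfl
    rw [permHash_mul, permHash_mul,
      Subgroup.mem_centralizer_iff.mp hg₁ π rfl,
      Subgroup.mem_centralizer_iff.mp hg₂ τ rfl]
end

section
/- Let G be a group and V a complex vector space with a representation ρ : G → GL(V) and a direct sum decomposition V = ⊕_{h ∈ G} V_h satisfying ρ(g)(V_h) = V_{g h g⁻¹}, with braiding c(u ⊗ v) = ρ(h)(v) ⊗ u for u ∈ V_h. Let s, σ ∈ G satisfy σ s σ⁻¹ = s⁻¹ ≠ s, and let v ∈ V_s be a nonzero vector with ρ(s)(v) = q·v for some scalar q ∈ ℂ (necessarily q ≠ 0). Set w = ρ(σ)(v). Then: (a) v and w are linearly independent (indeed w ∈ V_{s⁻¹}); (b) the subspace W = span{v, w} satisfies c(W ⊗ W) = W ⊗ W; and (c) c(v ⊗ v) = q·(v ⊗ v), c(v ⊗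 w) = q⁻¹·(w ⊗ v), c(w ⊗ v) = q⁻¹·(v ⊗ w), c(w ⊗ w) = q·(w ⊗ w). In particular W is a braided subspace of diagonal type with braiding matrix ((q, q⁻¹), (q⁻¹, q)). -/
open TensorProduct

/-- Let `V = ⊕_{h ∈ G} V_h` be a Yetter–Drinfeld module over `ℂG` with braiding
`c(u ⊗ v) = ρ(h)(v) ⊗ u` for `u ∈ V_h`.  Let `s, σ ∈ G` with `σ s σ⁻¹ = s⁻¹ ≠ s`, and let
`v ∈ V_s` be nonzero with `ρ(s)(v) = q·v` (necessarily `q ≠ 0`).  Set `w = ρ(σ)(v)`.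
Then `v, w` are linearly independent, `w ∈ V_{s⁻¹}`, the span `W` of `v, w` satisfies
`c(W ⊗ W) = W ⊗ W`, and on the basis `v, w` the braiding is diagonal with matrix
`((q, q⁻¹), (q⁻¹, q))`. -/
theorem yetterDrinfeld_diagonal_subspace (G : Type*) [Group G] [DecidableEq G]
    (V : Type*) [AddCommGroup V] [Module ℂ V]
    (ρ : Representation ℂ G V) (Vh : G → Submodule ℂ V)
    (hdec : DirectSum.IsInternal Vh)
    (hcompat : ∀ g h : G, Submodule.map (ρ g) (Vh h) = Vh (g * h * g⁻¹))
    (c : (V ⊗[ℂ] V) ≃ₗ[ℂ] (V ⊗[ℂ] V))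
    (hc : ∀ (h : G) (u z : V), u ∈ Vh h → c (u ⊗ₜ[ℂ] z) = (ρ h z) ⊗ₜ[ℂ] u)
    (s σ : G) (hσ : σ * s * σ⁻¹ = s⁻¹) (hs : s⁻¹ ≠ s)
    (v : V) (hv : v ∈ Vh s) (hv0 : v ≠ 0) (q : ℂ) (hq : ρ s v = q • v) :
    q ≠ 0 ∧
    (ρ σ v ∈ Vh s⁻¹ ∧ LinearIndependent ℂ ![v, ρ σ v]) ∧
    (Submodule.map c.toLinearMap
        (LinearMap.range (TensorProduct.map
          (Submodule.span ℂ {v, ρ σ v}).subtype (Submodule.span ℂ {v, ρ σ v}).subtype)) =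
      LinearMap.range (TensorProduct.map
          (Submodule.span ℂ {v, ρ σ v}).subtype (Submodule.span ℂ {v, ρ σ v}).subtype)) ∧
    c (v ⊗ₜ[ℂ] v) = q • (v ⊗ₜ[ℂ] v) ∧
    c (v ⊗ₜ[ℂ] (ρ σ v)) = q⁻¹ • ((ρ σ v) ⊗ₜ[ℂ] v) ∧
    c ((ρ σ v) ⊗ₜ[ℂ] v) = q⁻¹ • (v ⊗ₜ[ℂ] (ρ σ v)) ∧
    c ((ρ σ v) ⊗ₜ[ℂ] (ρ σ v)) = q • ((ρ σ v) ⊗ₜ[ℂ] (ρ σ v)) := by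
  set w := ρ σ v with hwdef
  -- basic facts about ρ
  have hcomp : ∀ (a b : G) (x : V), ρ (a * b) x = ρ a (ρ b x) := by
    intro a b x; rw [map_mul]; rfl
  have hinj : ∀ (g : G) (x : V), ρ g x = 0 → x = 0 := by
    intro g x hx
    have : ρ g⁻¹ (ρ g x) = x := by rw [← hcomp, inv_mul_cancel, map_one]; rfl
    rw [hx, map_zero] at this; exact this.symm
  -- q ≠ 0
  have hq0 : q ≠ 0 := by
    intro h
    apply hv0
    apply hinj s
    rw [hq, h, zero_smul]
  -- w ∈ Vh s⁻¹
  have hw : w ∈ Vh s⁻¹ := by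
    rw [← hσ, ← hcompat σ s]
    exact ⟨v, hv, rfl⟩
  -- w ≠ 0
  have hw0 : w ≠ 0 := fun h => hv0 (hinj σ v h)
  -- group element identities
  have hss : s⁻¹ * σ = σ * s := by
    rw [← hσ]; group
  have hss' : s * σ = σ * s⁻¹ := by
    have h3 : (σ * s * σ⁻¹)⁻¹ = (s⁻¹)⁻¹ := by rw [hσ]
    have h2 : σ * s⁻¹ * σ⁻¹ = s := by
      simpa [mul_inv_rev, mul_assoc] using h3
    have h4 : σ * s⁻¹ = s * σ := by rwa [mul_inv_eq_iff_eq_mul] at h2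
    exact h4.symm
  -- eigenvector facts
  have hqinv : ρ s⁻¹ v = q⁻¹ • v := by
    have h1 : ρ s⁻¹ (ρ s v) = v := by rw [← hcomp, inv_mul_cancel, map_one]; rfl
    rw [hq, map_smul] at h1
    calc ρ s⁻¹ v = q⁻¹ • (q • ρ s⁻¹ v) := by rw [smul_smul, inv_mul_cancel₀ hq0, one_smul]
      _ = q⁻¹ • v := by rw [h1]
  have hsw : ρ s w = q⁻¹ • w := by
    rw [hwdef, ← hcomp, hss', hcomp, hqinv, map_smul]
  have hsinvw : ρ s⁻¹ w = q • w := by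
    rw [hwdef, ← hcomp, hss, hcomp, hq, map_smul]
  -- the four braiding identities
  have hcvv : c (v ⊗ₜ[ℂ] v) = q • (v ⊗ₜ[ℂ] v) := by
    rw [hc s v v hv, hq, smul_tmul']
  have hcvw : c (v ⊗ₜ[ℂ] w) = q⁻¹ • (w ⊗ₜ[ℂ] v) := by
    rw [hc s v w hv, hsw, smul_tmul']
  have hcwv : c (w ⊗ₜ[ℂ] v) = q⁻¹ • (v ⊗ₜ[ℂ] w) := by
    rw [hc s⁻¹ w v hw, hqinv, smul_tmul']
  have hcww : c (w ⊗ₜ[ℂ] w) = q • (w ⊗ₜ[ℂ] w) := by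
    rw [hc s⁻¹ w w hw, hsinvw, smul_tmul']
  -- linear independence
  have hli : LinearIndependent ℂ ![v, w] := by
    rw [LinearIndependent.pair_iff]
    intro a b hab
    by_contra hcon
    have hVs : a • v = -(b • w) := by
      rw [← add_eq_zero_iff_eq_neg, hab]
    have hd : Disjoint (Vh s) (Vh s⁻¹) :=
      hdec.submodule_iSupIndep.pairwiseDisjoint (Ne.symm hs)
    have hmem : a • v ∈ Vh s ⊓ Vh s⁻¹ := by
      constructor
      · exact Submodule.smul_mem _ _ hv
      · rw [hVs]; exact Submodule.neg_mem _ (Submodule.smul_mem _ _ hw)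
    have hav : a • v = 0 := by
      have := hd.le_bot hmem
      simpa using this
    have ha : a = 0 := by
      rcases smul_eq_zero.mp hav with h | h
      · exact h
      · exact absurd h hv0
    have hb : b = 0 := by
      rw [ha, zero_smul, zero_add] at hab
      rcases smul_eq_zero.mp hab with h | h
      · exact h
      · exact absurd h hw0
    exact hcon ⟨ha, hb⟩
  -- the span part
  set W := Submodule.span ℂ ({v, w} : Set V) with hWdef
  have hvW : v ∈ W := Submodule.subset_span (by simp)
  have hwW : w ∈ W := Submodule.subset_span (by simp)
  set T := LinearMap.range (TensorProduct.map W.subtype W.subtype) with hTdef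
  set S : Set (V ⊗[ℂ] V) := {v ⊗ₜ[ℂ] v, v ⊗ₜ[ℂ] w, w ⊗ₜ[ℂ] v, w ⊗ₜ[ℂ] w} with hSdef
  have hmemT : ∀ x y : V, x ∈ W → y ∈ W → x ⊗ₜ[ℂ] y ∈ T := by
    intro x y hx hy
    exact ⟨(⟨x, hx⟩ : W) ⊗ₜ[ℂ] (⟨y, hy⟩ : W), rfl⟩
  have hT : T = Submodule.span ℂ S := by
    apply le_antisymm
    · rintro x ⟨t, rfl⟩
      induction t with
      | zero => simp
      | tmul m n =>
          rw [TensorProduct.map_tmul]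
          obtain ⟨a, b, hab⟩ := Submodule.mem_span_pair.mp m.2
          obtain ⟨e, f, hef⟩ := Submodule.mem_span_pair.mp n.2
          rw [Submodule.coe_subtype, ← hab, ← hef]
          rw [TensorProduct.add_tmul, TensorProduct.tmul_add, TensorProduct.tmul_add,
            TensorProduct.smul_tmul_smul, TensorProduct.smul_tmul_smul,
            TensorProduct.smul_tmul_smul, TensorProduct.smul_tmul_smul]
          apply Submodule.add_mem
          · apply Submodule.add_mem
            · exact Submodule.smul_mem _ _ (Submodule.subset_span (by simp [hSdef]))
            · exact Submodule.smul_mem _ _ (Submodule.subset_span (by simp [hSdef]))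
          · apply Submodule.add_mem
            · exact Submodule.smul_mem _ _ (Submodule.subset_span (by simp [hSdef]))
            · exact Submodule.smul_mem _ _ (Submodule.subset_span (by simp [hSdef]))
      | add x y hx hy =>
          rw [map_add]; exact Submodule.add_mem _ hx hy
    · rw [Submodule.span_le]
      rintro x hx
      rcases hx with h | h | h | h <;> subst h
      · exact hmemT v v hvW hvW
      · exact hmemT v w hvW hwW
      · exact hmemT w v hwW hvW
      · exact hmemT w w hwW hwW
  have hmap : Submodule.map c.toLinearMap T = T := by
    rw [hT, Submodule.map_span]
    apply le_antisymm
    · rw [Submodule.span_le]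
      rintro x ⟨y, hy, rfl⟩
      rcases hy with h | h | h | h <;> subst h
      · rw [LinearEquiv.coe_coe, hcvv]
        exact Submodule.smul_mem _ _ (Submodule.subset_span (by simp [hSdef]))
      · rw [LinearEquiv.coe_coe, hcvw]
        exact Submodule.smul_mem _ _ (Submodule.subset_span (by simp [hSdef]))
      · rw [LinearEquiv.coe_coe, hcwv]
        exact Submodule.smul_mem _ _ (Submodule.subset_span (by simp [hSdef]))
      · rw [LinearEquiv.coe_coe, hcww]
        exact Submodule.smul_mem _ _ (Submodule.subset_span (by simp [hSdef]))
    · rw [Submodule.span_le]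
      rintro x hx
      rcases hx with h | h | h | h <;> subst h
      · refine Submodule.mem_span.mpr fun P hP => ?_
        have h1 : c (v ⊗ₜ[ℂ] v) ∈ P := hP ⟨_, by simp [hSdef], rfl⟩
        have : q⁻¹ • c (v ⊗ₜ[ℂ] v) = v ⊗ₜ[ℂ] v := by
          rw [hcvv, smul_smul, inv_mul_cancel₀ hq0, one_smul]
        rw [← this]; exact Submodule.smul_mem _ _ h1
      · refine Submodule.mem_span.mpr fun P hP => ?_
        have h1 : c (w ⊗ₜ[ℂ] v) ∈ P := hP ⟨_, by simp [hSdef], rfl⟩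
        have : q • c (w ⊗ₜ[ℂ] v) = v ⊗ₜ[ℂ] w := by
          rw [hcwv, smul_smul, mul_inv_cancel₀ hq0, one_smul]
        rw [← this]; exact Submodule.smul_mem _ _ h1
      · refine Submodule.mem_span.mpr fun P hP => ?_
        have h1 : c (v ⊗ₜ[ℂ] w) ∈ P := hP ⟨_, by simp [hSdef], rfl⟩
        have : q • c (v ⊗ₜ[ℂ] w) = w ⊗ₜ[ℂ] v := by
          rw [hcvw, smul_smul, mul_inv_cancel₀ hq0, one_smul]
        rw [← this]; exact Submodule.smul_mem _ _ h1
      · refine Submodule.mem_span.mpr fun P hP => ?_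
        have h1 : c (w ⊗ₜ[ℂ] w) ∈ P := hP ⟨_, by simp [hSdef], rfl⟩
        have : q⁻¹ • c (w ⊗ₜ[ℂ] w) = w ⊗ₜ[ℂ] w := by
          rw [hcww, smul_smul, inv_mul_cancel₀ hq0, one_smul]
        rw [← this]; exact Submodule.smul_mem _ _ h1
  exact ⟨hq0, ⟨hw, hli⟩, hmap, hcvv, hcvw, hcwv, hcww⟩
end

section
/- Let H = ⟨(1 2 3 4), (1 3)⟩ ≤ S₄, let ρ : H → GL(2, ℂ) be the homomorphism with ρ((1 2 3 4)) = ((0, −1), (1, 0)) and ρ((1 3)) = ((−1, 0), (0, 1)), and set a = (1 3)(2 4), b = (1 2)(3 4), d = (1 4)(2 3) (all elements of H), v₁ = (1, 1)ᵀ, v₂ = (1, −1)ᵀ ∈ ℂ². Then v₁ and v₂ are common eigenvectors of ρ(a), ρ(b), ρ(d), with eigenvalues λ(a, 1) = λ(a, 2) = −1, λ(b, 1) = 1, λ(b, 2) = −1, λ(d, 1) = −1, λ(d, 2) = 1, where ρ(x) v_β = λ(x, β) v_β. Define x : {0,1,2} × {0,1,2} → H by x(0,0) = x(1,1) = x(2,2)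 = a, x(0,1) = x(1,0) = x(1,2) = d, x(0,2) = x(2,0) = x(2,1) = b, and define a matrix Q indexed by pairs I = (j, α) with j ∈ {0,1,2}, α ∈ {1,2} by Q(I, J) = λ(x(j, l), β) for I = (j, α), J = (l, β). Let S = {(0,1), (1,2), (2,2)} (so the complement of S among the six indices is {(0,2), (1,1), (2,1)}). Then: (a) Q(I, I) = −1 for every index I; (b) for I ≠ J, Q(I, J)·Q(J, I) = −1 if I and J both lie in S or both lie in the complement of S, and Q(I, J)·Q(J, I) = 1 otherwise. -/
open Equiv Matrix

/-- `A = (1 2 3 4) ∈ S₄` (letters `1,2,3,4` realized as `0,1,2,3 : Fin 4`). -/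
def A4 : Equiv.Perm (Fin 4) := swap 0 1 * swap 1 2 * swap 2 3

/-- `B = (1 3) ∈ S₄`. -/
def B4 : Equiv.Perm (Fin 4) := swap 0 2

/-- `H = ⟨A, B⟩ ≤ S₄`, the centralizer of `(1 3)(2 4)` in `S₄`. -/
def H4 : Subgroup (Equiv.Perm (Fin 4)) := Subgroup.closure {A4, B4}

lemma A4_mem_H4 : A4 ∈ H4 := Subgroup.subset_closure (Set.mem_insert _ _)

lemma B4_mem_H4 : B4 ∈ H4 := Subgroup.subset_closure (Set.mem_insert_of_mem _ rfl)

/-- `A` and `B` as elements of `H`. -/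
def A4' : H4 := ⟨A4, A4_mem_H4⟩

def B4' : H4 := ⟨B4, B4_mem_H4⟩

/-- The elements `a = (1 3)(2 4) = A²`, `d = (1 4)(2 3) = B·A³`, `b = (1 2)(3 4) = B·A`
of `H`, indexed by `0 ↦ a`, `1 ↦ d`, `2 ↦ b`. -/
def elt : Fin 3 → H4 := ![A4' ^ 2, B4' * A4' ^ 3, B4' * A4']

/-- The table `x : {0,1,2} × {0,1,2} → {a, d, b}` (values as indices `0 ↦ a`, `1 ↦ d`,
`2 ↦ b`): `x(0,0) = x(1,1) = x(2,2) = a`, `x(0,1) = x(1,0) = x(1,2) = d`,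
`x(0,2) = x(2,0) = x(2,1) = b`. -/
def xIdx : Fin 3 → Fin 3 → Fin 3 := ![![0, 1, 2], ![1, 0, 1], ![2, 2, 0]]

/-- The eigenvalues `λ(x, β)`, indexed by `0 ↦ a`, `1 ↦ d`, `2 ↦ b` and `β ∈ {1, 2}`
realized as `{0, 1}`:  `λ(a,1) = λ(a,2) = −1`, `λ(d,1) = −1`, `λ(d,2) = 1`,
`λ(b,1) = 1`, `λ(b,2) = −1`. -/
def lam : Fin 3 → Fin 2 → ℂ := ![![-1, -1], ![-1, 1], ![1, -1]]

/-- The common eigenvectors `v₁ = (1,1)ᵀ` and `v₂ = (1,−1)ᵀ` in `ℂ²`. -/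
def vb : Fin 2 → (Fin 2 → ℂ) := ![![1, 1], ![1, -1]]

/-- The braiding matrix `Q((j,α),(l,β)) = λ(x(j,l), β)`. -/
def Q : (Fin 3 × Fin 2) → (Fin 3 × Fin 2) → ℂ := fun I J => lam (xIdx I.1 J.1) J.2

/-- The component `S = {(0,1), (1,2), (2,2)}` (second coordinates `1,2` realized
as `0,1`). -/
def S : Set (Fin 3 × Fin 2) := {(0, 0), (1, 1), (2, 1)}

set_option maxHeartbeats 1000000 in
/-- Let `ρ : H → GL(2, ℂ)` with `ρ(A) = ((0, −1), (1, 0))`, `ρ(B) = ((−1, 0), (0, 1))`.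
Then `v₁ = (1,1)ᵀ` and `v₂ = (1,−1)ᵀ` are common eigenvectors of `ρ(a)`, `ρ(d)`, `ρ(b)`
with the eigenvalues `λ` listed in `lam`, and the matrix `Q((j,α),(l,β)) = λ(x(j,l), β)`
satisfies: (a) `Q(I,I) = −1` for all `I`; (b) for `I ≠ J`, `Q(I,J)·Q(J,I) = −1` if `I, J`
both lie in `S` or both lie in its complement, and `Q(I,J)·Q(J,I) = 1` otherwise. -/
theorem braiding_matrix_of_O22 (ρ : H4 →* GL (Fin 2) ℂ)
    (hρA : (ρ A4' : Matrix (Fin 2) (Fin 2) ℂ) = !![0, -1; 1, 0])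
    (hρB : (ρ B4' : Matrix (Fin 2) (Fin 2) ℂ) = !![-1, 0; 0, 1]) :
    (∀ (k : Fin 3) (β : Fin 2),
      (ρ (elt k) : Matrix (Fin 2) (Fin 2) ℂ).mulVec (vb β) = lam k β • vb β) ∧
    (∀ I : Fin 3 × Fin 2, Q I I = -1) ∧
    (∀ I J : Fin 3 × Fin 2, I ≠ J →
      ((I ∈ S ↔ J ∈ S) → Q I J * Q J I = -1) ∧
      (¬(I ∈ S ↔ J ∈ S) → Q I J * Q J I = 1)) := by
  have hA : ((ρ A4' : GL (Fin 2) ℂ) : Matrix (Fin 2) (Fin 2) ℂ) = !![0, -1; 1, 0] := hρA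
  have hB : ((ρ B4' : GL (Fin 2) ℂ) : Matrix (Fin 2) (Fin 2) ℂ) = !![-1, 0; 0, 1] := hρB
  have key : ∀ k : Fin 3, (ρ (elt k) : Matrix (Fin 2) (Fin 2) ℂ) =
      ![!![-1, 0; 0, -1], !![0, -1; -1, 0], !![0, 1; 1, 0]] k := by
    intro k
    have h2 : (ρ (A4' ^ 2) : Matrix (Fin 2) (Fin 2) ℂ) = !![-1, 0; 0, -1] := by
      rw [sq, _root_.map_mul, Units.val_mul, hA]
      norm_num [Matrix.mul_fin_two]
    fin_cases k
    · exact h2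
    · show (ρ (B4' * A4' ^ 3) : Matrix (Fin 2) (Fin 2) ℂ) = _
      rw [show A4' ^ 3 = A4' ^ 2 * A4' by group, ← mul_assoc, _root_.map_mul,
        Units.val_mul, _root_.map_mul, Units.val_mul, h2, hA, hB]
      norm_num [Matrix.mul_fin_two]
    · show (ρ (B4' * A4') : Matrix (Fin 2) (Fin 2) ℂ) = _
      rw [_root_.map_mul, Units.val_mul, hA, hB]
      norm_num [Matrix.mul_fin_two]
  refine ⟨?_, ?_, ?_⟩
  · intro k β
    rw [key k]
    fin_cases k <;> fin_cases β <;>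
      ext i <;> fin_cases i <;>
      simp [vb, lam, Matrix.mulVec, dotProduct, Fin.sum_univ_two]
  · intro I
    obtain ⟨j, α⟩ := I
    fin_cases j <;> fin_cases α <;> simp [Q, lam, xIdx]
  · intro I J hIJ
    obtain ⟨j, α⟩ := I; obtain ⟨l, β⟩ := J
    clear hρA hρB hA hB key
    fin_cases j <;> fin_cases l <;> fin_cases α <;> fin_cases β <;>
      simp_all [Q, lam, xIdx, S, Prod.ext_iff]
end
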